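/- arXiv:2002.11112 — 3 statements merged into one kernel-verified Lean document; each statement's English description precedes it below -/
import Mathlib

section
/- Let ρ₁, ..., ρₙ : S^{n-1} → (0,∞) be continuous positive functions on the unit sphere in ℝⁿ (radial functions of star bodies K₁,...,Kₙ), and define the dual mixed volume Ṽ(K₁,...,Kₙ) = (1/n) ∫_{S^{n-1}} ρ₁(u)···ρₙ(u) dS(u). Then Ṽ(K₁,...,Kₙ)ⁿ ≤ V(K₁)···V(Kₙ), where V(Kᵢ) = (1/n) ∫_{S^{n-1}} ρᵢ(u)ⁿ dS(u), with equality if and only if the ρᵢ are pairwise proportional. -/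
/-!
Normalize each `ρ i` by the positive constant making `∫ (ρ i)ⁿ = 1`. Pointwise AM-GM gives
`∏ ρ i ≤ (1/n) ∑ (ρ i)ⁿ`, and integrating yields `∫ ∏ ρ i ≤ 1`, which is the inequality after
undoing the normalization. Equality forces the continuous, nonnegative gap between the two means
to vanish everywhere, since the surface measure charges every nonempty open set; then the
normalized functions coincide, i.e. the `ρ i` are proportional.

The surface measure is finite and positive on open sets because near each unit vector `v` the
sphere is the graph of `h ↦ h + √(1 - ‖h‖²) v` over a ball of the hyperplane `vᗮ`: the graph map
is Lipschitz on a smaller ball, the orthogonal projection onto `vᗮ` is `1`-Lipschitz, and on `vᗮ`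
the `(n-1)`-dimensional Hausdorff measure is a Haar measure.
-/

open MeasureTheory Metric Finset

/-- The surface (spherical) measure on the unit sphere `S^{n-1} ⊆ ℝⁿ`,
realized as the `(n-1)`-dimensional Hausdorff measure. -/
noncomputable def sphereσ (n : ℕ) : Measure (sphere (0 : EuclideanSpace ℝ (Fin n)) 1) :=
  μH[(n : ℝ) - 1]

open Module
open scoped RealInnerProductSpace

section AMGM

variable {ι : Type*} [Fintype ι] [Nonempty ι]

theorem sum_inv_card_eq_one : ∑ _i : ι, (Fintype.card ι : ℝ)⁻¹ = 1 := by
  simp [card_univ]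

theorem prod_pow_card_rpow_inv_card {a : ι → ℝ} (ha : ∀ i, 0 ≤ a i) :
    ∏ i, (a i ^ Fintype.card ι) ^ (Fintype.card ι : ℝ)⁻¹ = ∏ i, a i :=
  prod_congr rfl fun i _ ↦ Real.pow_rpow_inv_natCast (ha i) Fintype.card_ne_zero

theorem prod_le_sum_pow_card_div_card {a : ι → ℝ} (ha : ∀ i, 0 ≤ a i) :
    ∏ i, a i ≤ (∑ i, a i ^ Fintype.card ι) / Fintype.card ι := by
  have := Real.geom_mean_le_arith_mean_weighted univ (fun _ ↦ (Fintype.card ι : ℝ)⁻¹)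
    (fun i ↦ a i ^ Fintype.card ι) (fun _ _ ↦ by positivity) sum_inv_card_eq_one
    (fun i _ ↦ pow_nonneg (ha i) _)
  rwa [prod_pow_card_rpow_inv_card ha, ← mul_sum, inv_mul_eq_div] at this

theorem prod_eq_sum_pow_card_div_card_iff {a : ι → ℝ} (ha : ∀ i, 0 ≤ a i) :
    ∏ i, a i = (∑ i, a i ^ Fintype.card ι) / Fintype.card ι ↔ ∀ i j, a i = a j := by
  have := Real.geom_mean_eq_arith_mean_weighted_iff_of_pos univ
    (fun _ ↦ (Fintype.card ι : ℝ)⁻¹) (fun i ↦ a i ^ Fintype.card ι) (fun _ _ ↦ by positivity)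
    sum_inv_card_eq_one    (fun i _ ↦ pow_nonneg (ha i) _)
  rw [prod_pow_card_rpow_inv_card ha, ← mul_sum, inv_mul_eq_div] at this
  simp only [this, mem_univ, true_implies, pow_left_inj₀ (ha _) (ha _) Fintype.card_ne_zero]

end AMGM

theorem proportional_iff_forall_div_eq {X ι : Type*} [MeasurableSpace X] {μ : Measure X}
    {n : ℕ} (hn : n ≠ 0) {f : ι → X → ℝ} {c : ι → ℝ} (hc : ∀ i, 0 < c i)
    (hcn : ∀ i, c i ^ n = ∫ x, f i x ^ n ∂μ) :
    (∀ i j, ∃ k : ℝ, 0 < k ∧ ∀ x, f i x = k * f j x) ↔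
      ∀ x i j, f i x / c i = f j x / c j := by
  constructor
  · intro hprop x i j
    obtain ⟨k, hk, hfk⟩ := hprop i j
    have hcij : c i = k * c j := by
      refine (pow_left_inj₀ (hc i).le (mul_pos hk (hc j)).le hn).1 ?_
      simp only [hcn, hfk, mul_pow, integral_const_mul]
    rw [hfk, hcij, mul_div_mul_left _ _ hk.ne']
  · intro hdiv i j
    refine ⟨c i / c j, div_pos (hc i) (hc j), fun x ↦ ?_⟩
    rw [div_mul_comm, ← hdiv x i j, div_mul_cancel₀ _ (hc i).ne']

section Holder

variable {X ι : Type*} [TopologicalSpace X] [CompactSpace X] [MeasurableSpace X]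
  [OpensMeasurableSpace X] {μ : Measure X} [IsFiniteMeasure μ] [Fintype ι] [Nonempty ι]

theorem Continuous.integrable_of_compactSpace {f : X → ℝ} (hf : Continuous f) : Integrable f μ :=
  hf.integrable_of_hasCompactSupport (.of_compactSpace f)

theorem integral_sum_pow_card_div_card {g : ι → X → ℝ} (hg : ∀ i, Continuous (g i))
    (hg1 : ∀ i, ∫ x, g i x ^ Fintype.card ι ∂μ = 1) :
    ∫ x, (∑ i, g i x ^ Fintype.card ι) / Fintype.card ι ∂μ = 1 := by
  rw [integral_div,
    integral_finsetSum _ fun i _ ↦ Continuous.integrable_of_compactSpace (by fun_prop)]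
  simp [hg1, card_univ]

theorem integral_prod_le_one {g : ι → X → ℝ} (hg : ∀ i, Continuous (g i))
    (hg0 : ∀ i x, 0 ≤ g i x) (hg1 : ∀ i, ∫ x, g i x ^ Fintype.card ι ∂μ = 1) :
    ∫ x, ∏ i, g i x ∂μ ≤ 1 := by
  rw [← integral_sum_pow_card_div_card hg hg1]
  refine integral_mono (continuous_finsetProd _ fun i _ ↦ hg i).integrable_of_compactSpace
    ?_ fun x ↦ prod_le_sum_pow_card_div_card (hg0 · x)
  exact ((continuous_finsetSum _ fun i _ ↦ (hg i).pow _).div_const _).integrable_of_compactSpace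

theorem integral_prod_eq_one_iff [μ.IsOpenPosMeasure] {g : ι → X → ℝ}
    (hg : ∀ i, Continuous (g i)) (hg0 : ∀ i x, 0 ≤ g i x)
    (hg1 : ∀ i, ∫ x, g i x ^ Fintype.card ι ∂μ = 1) :
    ∫ x, ∏ i, g i x ∂μ = 1 ↔ ∀ x i j, g i x = g j x := by
  set A : X → ℝ := fun x ↦ (∑ i, g i x ^ Fintype.card ι) / Fintype.card ι
  set G : X → ℝ := fun x ↦ ∏ i, g i x
  have hA : Continuous A := (continuous_finsetSum _ fun i _ ↦ (hg i).pow _).div_const _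
  have hG : Continuous G := continuous_finsetProd _ fun i _ ↦ hg i
  have hGA : ∀ x, G x ≤ A x := fun x ↦ prod_le_sum_pow_card_div_card (hg0 · x)
  calc ∫ x, G x ∂μ = 1 ↔ ∫ x, A x - G x ∂μ = 0 := by
        rw [integral_sub hA.integrable_of_compactSpace hG.integrable_of_compactSpace,
          integral_sum_pow_card_div_card hg hg1, sub_eq_zero, eq_comm]
    _ ↔ (fun x ↦ A x - G x) =ᵐ[μ] 0 := integral_eq_zero_iff_of_nonneg
        (fun x ↦ sub_nonneg.2 (hGA x))
        (hA.integrable_of_compactSpace.sub hG.integrable_of_compactSpace)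
    _ ↔ (fun x ↦ A x - G x) = 0 := (hA.sub hG).ae_eq_iff_eq μ continuous_const
    _ ↔ ∀ x i j, g i x = g j x := by
        simp only [funext_iff, Pi.zero_apply, sub_eq_zero, A, G]
        exact forall_congr' fun x ↦ eq_comm.trans (prod_eq_sum_pow_card_div_card_iff (hg0 · x))

theorem integral_prod_pow_card_le_prod_and_eq_iff [μ.IsOpenPosMeasure] [Nonempty X]
    {f : ι → X → ℝ} (hf : ∀ i, Continuous (f i)) (hpos : ∀ i x, 0 < f i x) :
    (∫ x, ∏ i, f i x ∂μ) ^ Fintype.card ι ≤ ∏ i, ∫ x, f i x ^ Fintype.card ι ∂μ ∧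
      ((∫ x, ∏ i, f i x ∂μ) ^ Fintype.card ι = ∏ i, ∫ x, f i x ^ Fintype.card ι ∂μ ↔
        ∀ i j, ∃ k : ℝ, 0 < k ∧ ∀ x, f i x = k * f j x) := by
  set N := Fintype.card ι
  have hN : N ≠ 0 := Fintype.card_ne_zero
  have hI : ∀ i, 0 < ∫ x, f i x ^ N ∂μ := fun i ↦
    integral_pos_of_integrable_nonneg_nonzero ((hf i).pow N)
      ((hf i).pow N).integrable_of_compactSpace (fun x ↦ (pow_pos (hpos i x) N).le)
      (pow_pos (hpos i (Classical.arbitrary X)) N).ne'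
  set c : ι → ℝ := fun i ↦ (∫ x, f i x ^ N ∂μ) ^ (N⁻¹ : ℝ)
  have hc : ∀ i, 0 < c i := fun i ↦ Real.rpow_pos_of_pos (hI i) _
  have hcN : ∀ i, c i ^ N = ∫ x, f i x ^ N ∂μ := fun i ↦ Real.rpow_inv_natCast_pow (hI i).le hN
  set g : ι → X → ℝ := fun i x ↦ f i x / c i
  have hg : ∀ i, Continuous (g i) := fun i ↦ (hf i).div_const _
  have hg0 : ∀ i x, 0 ≤ g i x := fun i x ↦ (div_pos (hpos i x) (hc i)).le
  have hg1 : ∀ i, ∫ x, g i x ^ N ∂μ = 1 := fun i ↦ by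
    simp only [g, div_pow, integral_div, hcN, div_self (hI i).ne']
  have hscale : (∫ x, ∏ i, f i x ∂μ) ^ N =
      (∏ i, ∫ x, f i x ^ N ∂μ) * (∫ x, ∏ i, g i x ∂μ) ^ N := by
    simp only [g, prod_div_distrib, integral_div, div_pow, ← prod_pow, hcN]
    rw [mul_div_cancel₀ _ (prod_pos fun i _ ↦ hI i).ne']
  have hg_int : 0 ≤ ∫ x, ∏ i, g i x ∂μ := integral_nonneg fun x ↦ prod_nonneg fun i _ ↦ hg0 i x
  refine ⟨?_, ?_⟩
  · rw [hscale]
    exact mul_le_of_le_one_right (prod_pos fun i _ ↦ hI i).le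
      (pow_le_one₀ hg_int (integral_prod_le_one hg hg0 hg1))
  · rw [hscale, mul_eq_left₀ (prod_pos fun i _ ↦ hI i).ne', pow_eq_one_iff_of_nonneg hg_int hN,
      integral_prod_eq_one_iff hg hg0 hg1, proportional_iff_forall_div_eq hN hc hcN]

end Holder

theorem abs_sqrt_sub_sqrt_le_abs_sub {a b : ℝ} (ha : 1 / 4 ≤ a) (hb : 1 / 4 ≤ b) :
    |√a - √b| ≤ |a - b| := by
  have hsa : 1 / 2 ≤ √a := Real.le_sqrt_of_sq_le (by linarith)
  have hsb : 1 / 2 ≤ √b := Real.le_sqrt_of_sq_le (by linarith)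
  have hab : a - b = (√a - √b) * (√a + √b) := by
    linear_combination Real.sq_sqrt (by linarith : 0 ≤ b) - Real.sq_sqrt (by linarith : 0 ≤ a)
  rw [hab, abs_mul, abs_of_pos (by linarith : 0 < √a + √b)]
  exact le_mul_of_one_le_right (abs_nonneg _) (by linarith)

section SphereGraph

variable {F : Type*} [NormedAddCommGroup F] [InnerProductSpace ℝ F] {v : F}

noncomputable def sphereGraph (v : F) (h : (ℝ ∙ v)ᗮ) : F :=
  h + √(1 - ‖h‖ ^ 2) • v

theorem continuous_sphereGraph (v : F) : Continuous (sphereGraph v) := by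
  unfold sphereGraph; fun_prop

theorem sphereGraph_zero (v : F) : sphereGraph v 0 = v := by
  simp [sphereGraph]

theorem norm_add_smul_sq_of_mem_orthogonal (hv : ‖v‖ = 1) (h : (ℝ ∙ v)ᗮ) (s : ℝ) :
    ‖(h : F) + s • v‖ ^ 2 = ‖h‖ ^ 2 + s ^ 2 := by
  have horth : ⟪(h : F), s • v⟫ = 0 := by
    rw [real_inner_smul_right, real_inner_comm,
      Submodule.mem_orthogonal_singleton_iff_inner_right.1 h.2, mul_zero]
  rw [← sq_abs s, ← Real.norm_eq_abs, ← mul_one ‖s‖, ← hv, ← norm_smul, sq, sq, sq]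
  exact norm_add_sq_eq_norm_sq_add_norm_sq_real horth

theorem norm_sphereGraph (hv : ‖v‖ = 1) {h : (ℝ ∙ v)ᗮ} (hh : ‖h‖ ≤ 1) :
    ‖sphereGraph v h‖ = 1 := by
  have hsq : ‖sphereGraph v h‖ ^ 2 = 1 := by
    rw [sphereGraph, norm_add_smul_sq_of_mem_orthogonal hv,
      Real.sq_sqrt (by nlinarith [norm_nonneg h])]
    ring
  exact (pow_eq_one_iff_of_nonneg (norm_nonneg _) two_ne_zero).1 hsq

theorem orthogonalProjectionOnto_sphereGraph (v : F) (h : (ℝ ∙ v)ᗮ) :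
    (ℝ ∙ v)ᗮ.orthogonalProjectionOnto (sphereGraph v h) = h := by
  rw [sphereGraph, map_add, map_smul,
    Submodule.orthogonalProjectionOnto_orthogonalComplement_singleton_eq_zero,
    Submodule.orthogonalProjectionOnto_mem_subspace_eq_self, smul_zero, add_zero]

theorem coe_orthogonalProjectionOnto_orthogonal_singleton (hv : ‖v‖ = 1) (u : F) :
    ((ℝ ∙ v)ᗮ.orthogonalProjectionOnto u : F) = u - ⟪v, u⟫ • v := by
  change (ℝ ∙ v)ᗮ.starProjection u = _
  rw [Submodule.starProjection_orthogonal_val, Submodule.starProjection_unit_singleton ℝ hv]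

theorem norm_orthogonalProjectionOnto_orthogonal_singleton_sq (hv : ‖v‖ = 1) (u : F) :
    ‖(ℝ ∙ v)ᗮ.orthogonalProjectionOnto u‖ ^ 2 = ‖u‖ ^ 2 - ⟪v, u⟫ ^ 2 := by
  have := norm_add_smul_sq_of_mem_orthogonal hv ((ℝ ∙ v)ᗮ.orthogonalProjectionOnto u) ⟪v, u⟫
  rw [coe_orthogonalProjectionOnto_orthogonal_singleton hv, sub_add_cancel] at this
  linarith

theorem sphereGraph_orthogonalProjectionOnto (hv : ‖v‖ = 1) {u : F} (hu : ‖u‖ = 1)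
    (hvu : 0 ≤ ⟪v, u⟫) : sphereGraph v ((ℝ ∙ v)ᗮ.orthogonalProjectionOnto u) = u := by
  rw [sphereGraph, norm_orthogonalProjectionOnto_orthogonal_singleton_sq hv, hu, one_pow,
    sub_sub_cancel, Real.sqrt_sq hvu, coe_orthogonalProjectionOnto_orthogonal_singleton hv,
    sub_add_cancel]

theorem lipschitzOnWith_sphereGraph (hv : ‖v‖ = 1) :
    LipschitzOnWith 3 (sphereGraph v) (closedBall 0 (4 / 5)) := by
  refine LipschitzOnWith.of_dist_le_mul fun h₁ hh₁ h₂ hh₂ ↦ ?_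
  rw [mem_closedBall_zero_iff] at hh₁ hh₂
  have hnorm : |‖h₁‖ - ‖h₂‖| ≤ ‖h₁ - h₂‖ := abs_norm_sub_norm_le h₁ h₂
  have hsqrt : |√(1 - ‖h₁‖ ^ 2) - √(1 - ‖h₂‖ ^ 2)| ≤ 2 * ‖h₁ - h₂‖ := by
    refine (abs_sqrt_sub_sqrt_le_abs_sub (by nlinarith [norm_nonneg h₁])
      (by nlinarith [norm_nonneg h₂])).trans ?_
    rw [show 1 - ‖h₁‖ ^ 2 - (1 - ‖h₂‖ ^ 2) = (‖h₂‖ - ‖h₁‖) * (‖h₂‖ + ‖h₁‖) by ring, abs_mul,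
      abs_sub_comm, abs_of_nonneg (by positivity : 0 ≤ ‖h₂‖ + ‖h₁‖)]
    nlinarith [abs_nonneg (‖h₁‖ - ‖h₂‖)]
  rw [dist_eq_norm, dist_eq_norm, sphereGraph, sphereGraph,
    add_sub_add_comm, ← sub_smul, NNReal.coe_ofNat]
  calc ‖(h₁ : F) - h₂ + (√(1 - ‖h₁‖ ^ 2) - √(1 - ‖h₂‖ ^ 2)) • v‖
      ≤ ‖h₁ - h₂‖ + |√(1 - ‖h₁‖ ^ 2) - √(1 - ‖h₂‖ ^ 2)| := by
        refine (norm_add_le _ _).trans ?_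
        rw [norm_smul, hv, mul_one, Real.norm_eq_abs, ← Submodule.coe_sub]
        exact le_rfl
    _ ≤ 3 * ‖h₁ - h₂‖ := by linarith

end SphereGraph

section SphereMeasure

variable {F : Type*} [NormedAddCommGroup F] [InnerProductSpace ℝ F] [FiniteDimensional ℝ F]

theorem finrank_orthogonal_span_singleton_eq_sub_one {v : F} (hv : v ≠ 0) :
    (finrank ℝ (ℝ ∙ v)ᗮ : ℝ) = finrank ℝ F - 1 := by
  have := (ℝ ∙ v).finrank_add_finrank_orthogonal
  rw [finrank_span_singleton hv] at this
  rw [← this]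
  push_cast
  ring

variable [MeasurableSpace F] [BorelSpace F]

theorem hausdorffMeasure_sphere_cap_lt_top {v : F} (hv : ‖v‖ = 1) :
    μH[(finrank ℝ F : ℝ) - 1] {u : sphere (0 : F) 1 | 3 / 5 < ⟪v, u⟫} < ⊤ := by
  have hv0 : v ≠ 0 := by rintro rfl; simp at hv
  rw [← finrank_orthogonal_span_singleton_eq_sub_one hv0,
    ← isometry_subtype_coe.hausdorffMeasure_image (Or.inl (Nat.cast_nonneg _))]
  have hcap : Subtype.val '' {u : sphere (0 : F) 1 | 3 / 5 < ⟪v, u⟫} ⊆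
      sphereGraph v '' closedBall 0 (4 / 5) := by
    rintro _ ⟨u, hvu, rfl⟩
    have hu : ‖(u : F)‖ = 1 := norm_eq_of_mem_sphere u
    refine ⟨_, ?_, sphereGraph_orthogonalProjectionOnto hv hu (by linarith [hvu.out])⟩
    rw [mem_closedBall_zero_iff,
      ← pow_le_pow_iff_left₀ (norm_nonneg _) (by norm_num) two_ne_zero,
      norm_orthogonalProjectionOnto_orthogonal_singleton_sq hv, hu]
    nlinarith [hvu.out]
  set d : ℝ := ((finrank ℝ (ℝ ∙ v)ᗮ : ℕ) : ℝ)
  calc _ ≤ μH[d] (sphereGraph v '' closedBall 0 (4 / 5)) := measure_mono hcap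
    _ ≤ 3 ^ d * μH[d] (closedBall 0 (4 / 5)) :=
      (lipschitzOnWith_sphereGraph hv).hausdorffMeasure_image_le (Nat.cast_nonneg _)
    _ < ⊤ := ENNReal.mul_lt_top (ENNReal.rpow_lt_top_of_nonneg (Nat.cast_nonneg _) (by simp))
      (isCompact_closedBall _ _).measure_lt_top

variable [Nontrivial F]

instance : IsFiniteMeasure (μH[(finrank ℝ F : ℝ) - 1] : Measure (sphere (0 : F) 1)) := by
  have hcover : (Set.univ : Set (sphere (0 : F) 1)) ⊆
      ⋃ v : sphere (0 : F) 1, {u | 3 / 5 < ⟪(v : F), u⟫} := fun u _ ↦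
    Set.mem_iUnion.2 ⟨u, by simp [norm_eq_of_mem_sphere u]; norm_num⟩
  obtain ⟨t, ht⟩ := isCompact_univ.elim_finite_subcover _
    (fun v ↦ isOpen_lt continuous_const (continuous_const.inner continuous_subtype_val)) hcover
  refine ⟨(measure_mono ht).trans_lt ((measure_biUnion_finset_le _ _).trans_lt ?_)⟩
  exact ENNReal.sum_lt_top.2 fun v _ ↦
    hausdorffMeasure_sphere_cap_lt_top (norm_eq_of_mem_sphere v)

instance : (μH[(finrank ℝ F : ℝ) - 1] : Measure (sphere (0 : F) 1)).IsOpenPosMeasure := by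
  refine ⟨fun U hU ⟨v, hvU⟩ ↦ ?_⟩
  obtain ⟨O, hO, rfl⟩ := isOpen_induced_iff.1 hU
  have hv : ‖(v : F)‖ = 1 := norm_eq_of_mem_sphere v
  set H := (ℝ ∙ (v : F))ᗮ
  set W : Set H := sphereGraph (v : F) ⁻¹' O ∩ ball 0 1
  have hW : IsOpen W := (hO.preimage (continuous_sphereGraph _)).inter isOpen_ball
  have hW0 : (0 : H) ∈ W := ⟨by simpa [sphereGraph_zero] using hvU, mem_ball_self one_pos⟩
  have hWU : W ⊆ H.orthogonalProjectionOnto ''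
      (Subtype.val '' (Subtype.val ⁻¹' O : Set (sphere (0 : F) 1))) := by
    rintro h ⟨hhO, hh⟩
    have hs : sphereGraph (v : F) h ∈ sphere (0 : F) 1 :=
      mem_sphere_zero_iff_norm.2 (norm_sphereGraph hv (mem_ball_zero_iff.1 hh).le)
    exact ⟨_, ⟨⟨_, hs⟩, hhO, rfl⟩, orthogonalProjectionOnto_sphereGraph _ h⟩
  rw [← finrank_orthogonal_span_singleton_eq_sub_one (ne_zero_of_mem_sphere one_ne_zero v),
    ← isometry_subtype_coe.hausdorffMeasure_image (Or.inl (Nat.cast_nonneg _))]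
  refine ((hW.measure_pos μH[(finrank ℝ H : ℝ)] ⟨0, hW0⟩).trans_le
    ((measure_mono hWU).trans ?_)).ne'
  simpa using H.lipschitzWith_orthogonalProjectionOnto.hausdorffMeasure_image_le
    (Nat.cast_nonneg (finrank ℝ H)) _

end SphereMeasure

theorem sphereσ_eq_hausdorffMeasure (n : ℕ) :
    sphereσ n = μH[(finrank ℝ (EuclideanSpace ℝ (Fin n)) : ℝ) - 1] := by
  rw [finrank_euclideanSpace_fin]
  rfl

instance (n : ℕ) [NeZero n] : IsFiniteMeasure (sphereσ n) :=
  sphereσ_eq_hausdorffMeasure n ▸ inferInstance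

instance (n : ℕ) [NeZero n] : (sphereσ n).IsOpenPosMeasure :=
  sphereσ_eq_hausdorffMeasure n ▸ inferInstance

/-- Dual mixed volume type inequality: `Ṽ(K₁,...,Kₙ)ⁿ ≤ V(K₁)⋯V(Kₙ)`, with equality iff
the radial functions are pairwise proportional. -/
theorem dual_mixed_volume_le_prod_volumes
    (n : ℕ) (hn : 0 < n)
    (ρ : Fin n → (sphere (0 : EuclideanSpace ℝ (Fin n)) 1 → ℝ))
    (hcont : ∀ i, Continuous (ρ i))
    (hpos : ∀ i u, 0 < ρ i u)
    (Vt : ℝ) (hVt : Vt = (1 / n) * ∫ u, (∏ i, ρ i u) ∂(sphereσ n))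
    (V : Fin n → ℝ) (hV : ∀ i, V i = (1 / n) * ∫ u, (ρ i u) ^ n ∂(sphereσ n)) :
    Vt ^ n ≤ ∏ i, V i ∧
      (Vt ^ n = ∏ i, V i ↔
        ∀ i j, ∃ c : ℝ, 0 < c ∧ ∀ u, ρ i u = c * ρ j u) := by
  have : NeZero n := ⟨hn.ne'⟩
  have : Nonempty (sphere (0 : EuclideanSpace ℝ (Fin n)) 1) :=
    (NormedSpace.sphere_nonempty.2 zero_le_one).to_subtype
  obtain ⟨hle, heq⟩ := integral_prod_pow_card_le_prod_and_eq_iff (μ := sphereσ n) hcont hpos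
  rw [Fintype.card_fin] at hle heq
  have hscale : (0 : ℝ) < (1 / n) ^ n := by positivity
  have hVt' : Vt ^ n = (1 / n) ^ n * (∫ u, ∏ i, ρ i u ∂(sphereσ n)) ^ n := by
    rw [hVt, mul_pow]
  have hV' : ∏ i, V i = (1 / n) ^ n * ∏ i, ∫ u, ρ i u ^ n ∂(sphereσ n) := by
    simp only [hV, prod_mul_distrib, prod_const, card_univ, Fintype.card_fin]
  rw [hVt', hV', mul_le_mul_iff_right₀ hscale, mul_right_inj' hscale.ne']
  exact ⟨hle, heq⟩
end

section
/- Let K, L be star bodies in ℝⁿ and p ≥ 1. Define the L_p dual mixed volume Ṽ_{-p}(K,L) = (1/n)∫_{S^{n-1}} ρ(K,u)^{n+p} ρ(L,u)^{-p} dS(u). Then Ṽ_{-p}(K,L)ⁿ ≥ V(K)^{n+p} V(L)^{-p}, with equality if and only if K and L are dilates. -/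
/-
Put `F = ρ_K^(n+p) ρ_L^(-p)` and `G = ρ_L^n`. Then `ρ_K^n = F^(n/(n+p)) G^(p/(n+p))`, so Hölder's
inequality gives `∫ ρ_K^n ≤ (∫ F)^(n/(n+p)) (∫ G)^(p/(n+p))`, which rearranges to the inequality.
Hölder's inequality is obtained by integrating the weighted AM-GM defect of `F / ∫ F` and
`G / ∫ G`; equality forces the defect to vanish a.e., i.e. `F` and `G` to be proportional, i.e.
`ρ_K / ρ_L` to be constant (everywhere, by continuity).

The measure theory needed is that `μH[n-1]` on `S^(n-1)` is finite and positive on nonempty open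
sets. Both come from the orthogonal projection onto `u^⊥`: it is `1`-Lipschitz, maps small caps
around `u` onto neighbourhoods of `0` in `u^⊥`, and is bi-Lipschitz on the cap `⟪u, x⟫ ≥ 1/2`,
while `μH[n-1]` on the `(n-1)`-dimensional space `u^⊥` is a Haar measure.
-/

open MeasureTheory Metric Real

open Module Set
open scoped ENNReal RealInnerProductSpace

section SphereGeometry

variable {E : Type*} [NormedAddCommGroup E] [InnerProductSpace ℝ E] {u : E} {m : ℕ}

theorem starProjection_orthogonal_span_unit (hu : ‖u‖ = 1) (x : E) :
    (ℝ ∙ u)ᗮ.starProjection x = x - ⟪u, x⟫ • u := by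
  rw [Submodule.starProjection_orthogonal_val, Submodule.starProjection_unit_singleton ℝ hu]

theorem norm_starProjection_orthogonal_span_unit_sq (hu : ‖u‖ = 1) (x : E) :
    ‖(ℝ ∙ u)ᗮ.starProjection x‖ ^ 2 = ‖x‖ ^ 2 - ⟪u, x⟫ ^ 2 := by
  rw [starProjection_orthogonal_span_unit hu, norm_sub_sq_real, real_inner_smul_right,
    norm_smul, hu, real_inner_comm, Real.norm_eq_abs]
  ring_nf; rw [sq_abs]; ring

theorem norm_sub_le_three_mul_norm_starProjection_sub (hu : ‖u‖ = 1) {x y : E}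
    (hx : ‖x‖ = 1) (hy : ‖y‖ = 1) (hux : 1 / 2 ≤ ⟪u, x⟫) (huy : 1 / 2 ≤ ⟪u, y⟫) :
    ‖x - y‖ ≤ 3 * ‖(ℝ ∙ u)ᗮ.starProjection x - (ℝ ∙ u)ᗮ.starProjection y‖ := by
  have hX := norm_starProjection_orthogonal_span_unit_sq hu x
  have hY := norm_starProjection_orthogonal_span_unit_sq hu y
  have hXY := norm_starProjection_orthogonal_span_unit_sq hu (x - y)
  set P := (ℝ ∙ u)ᗮ.starProjection
  rw [hx] at hX
  rw [hy] at hY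
  rw [map_sub, inner_sub_right] at hXY
  have hPx : ‖P x‖ ≤ 1 := by nlinarith [norm_nonneg (P x)]
  have hPy : ‖P y‖ ≤ 1 := by nlinarith [norm_nonneg (P y)]
  have hnorm : |‖P y‖ - ‖P x‖| ≤ ‖P x - P y‖ := norm_sub_rev (P x) _ ▸ abs_norm_sub_norm_le _ _
  have hinner : |⟪u, x⟫ - ⟪u, y⟫| ≤ 2 * ‖P x - P y‖ := calc
    |⟪u, x⟫ - ⟪u, y⟫| ≤ |⟪u, x⟫ - ⟪u, y⟫| * (⟪u, x⟫ + ⟪u, y⟫) :=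
      le_mul_of_one_le_right (abs_nonneg _) (by linarith)
    _ = |‖P y‖ - ‖P x‖| * (‖P y‖ + ‖P x‖) := by
      rw [← abs_of_nonneg (by linarith : 0 ≤ ⟪u, x⟫ + ⟪u, y⟫),
        ← abs_of_nonneg (by positivity : 0 ≤ ‖P y‖ + ‖P x‖), ← abs_mul, ← abs_mul]
      congr 1
      linear_combination hX - hY
    _ ≤ ‖P x - P y‖ * 2 := mul_le_mul hnorm (by linarith) (by positivity) (norm_nonneg _)
    _ = 2 * ‖P x - P y‖ := mul_comm _ _
  have hsq : ‖x - y‖ ^ 2 ≤ (3 * ‖P x - P y‖) ^ 2 := by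
    nlinarith [sq_abs (⟪u, x⟫ - ⟪u, y⟫), abs_nonneg (⟪u, x⟫ - ⟪u, y⟫)]
  exact (pow_le_pow_iff_left₀ (norm_nonneg _) (by positivity) two_ne_zero).1 hsq

theorem exists_norm_eq_one_orthogonalProjectionOnto_eq (hu : ‖u‖ = 1) {w : (ℝ ∙ u)ᗮ}
    (hw : ‖w‖ ≤ 1) : ∃ x : E, ‖x‖ = 1 ∧ (ℝ ∙ u)ᗮ.orthogonalProjectionOnto x = w ∧
      ‖x - u‖ ^ 2 ≤ 2 * ‖w‖ ^ 2 := by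
  set s := √(1 - ‖w‖ ^ 2)
  have hs2 : s ^ 2 = 1 - ‖w‖ ^ 2 := Real.sq_sqrt (by nlinarith [norm_nonneg w])
  have hs1 : s ≤ 1 := by nlinarith [Real.sqrt_nonneg (1 - ‖w‖ ^ 2)]
  have huw : ⟪u, (w : E)⟫ = 0 := Submodule.mem_orthogonal_singleton_iff_inner_right.1 w.2
  have hw' : ‖(w : E)‖ = ‖w‖ := rfl
  have hs0 : 0 ≤ s := Real.sqrt_nonneg _
  have hux : ⟪u, w + s • u⟫ = s := by
    rw [inner_add_right, real_inner_smul_right, real_inner_self_eq_norm_sq, hu, huw]; ring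
  have hnorm : ‖(w : E) + s • u‖ ^ 2 = 1 := by
    rw [norm_add_sq_real, real_inner_smul_right, real_inner_comm, huw, norm_smul, hu,
      Real.norm_eq_abs, mul_one, sq_abs, hw']
    linarith
  refine ⟨w + s • u, ?_, ?_, ?_⟩
  · exact (pow_eq_one_iff_of_nonneg (norm_nonneg _) two_ne_zero).1 hnorm
  · apply Subtype.ext
    change (ℝ ∙ u)ᗮ.starProjection _ = _
    rw [starProjection_orthogonal_span_unit hu, hux, add_sub_cancel_right]
  · rw [norm_sub_sq_real, hnorm, real_inner_comm, hux, hu]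
    nlinarith [mul_nonneg hs0 (sub_nonneg.2 hs1)]

theorem finrank_orthogonal_span_unit (hE : finrank ℝ E = m + 1) (hu : ‖u‖ = 1) :
    finrank ℝ (ℝ ∙ u)ᗮ = m :=
  have : Fact (finrank ℝ E = m + 1) := ⟨hE⟩
  Submodule.finrank_orthogonal_span_singleton (norm_ne_zero_iff.1 (hu ▸ one_ne_zero))

variable [MeasurableSpace E] [BorelSpace E] [FiniteDimensional ℝ E]

theorem isAddHaarMeasure_hausdorffMeasure_orthogonal_span_unit (hE : finrank ℝ E = m + 1)
    (hu : ‖u‖ = 1) : (μH[m] : Measure (ℝ ∙ u)ᗮ).IsAddHaarMeasure := by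
  simpa [finrank_orthogonal_span_unit hE hu] using
    isAddHaarMeasure_hausdorffMeasure (E := (ℝ ∙ u)ᗮ)

theorem hausdorffMeasure_sphere_inter_ball_pos (hE : finrank ℝ E = m + 1) (hu : ‖u‖ = 1)
    {r : ℝ} (hr : 0 < r) : 0 < μH[m] (sphere (0 : E) 1 ∩ ball u r) := by
  have := isAddHaarMeasure_hausdorffMeasure_orthogonal_span_unit hE hu
  set P := (ℝ ∙ u)ᗮ.orthogonalProjectionOnto
  have hball : ball 0 (min 1 (r / 2)) ⊆ P '' (sphere (0 : E) 1 ∩ ball u r) := by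
    intro w hw
    rw [mem_ball_zero_iff] at hw
    obtain ⟨x, hx, hxw, hxu⟩ :=
      exists_norm_eq_one_orthogonalProjectionOnto_eq hu (hw.le.trans (min_le_left _ _))
    refine ⟨x, ⟨mem_sphere_zero_iff_norm.2 hx, ?_⟩, hxw⟩
    have hwr : ‖w‖ < r / 2 := hw.trans_le (min_le_right _ _)
    rw [mem_ball, dist_eq_norm]
    nlinarith [norm_nonneg (x - u), norm_nonneg w]
  calc 0 < μH[m] (ball (0 : (ℝ ∙ u)ᗮ) (min 1 (r / 2))) := measure_ball_pos _ _ (by positivity)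
    _ ≤ μH[m] (P '' (sphere (0 : E) 1 ∩ ball u r)) := measure_mono hball
    _ ≤ μH[m] (sphere (0 : E) 1 ∩ ball u r) := by
      simpa using (ℝ ∙ u)ᗮ.lipschitzWith_orthogonalProjectionOnto.hausdorffMeasure_image_le
        m.cast_nonneg (sphere (0 : E) 1 ∩ ball u r)

theorem hausdorffMeasure_sphere_inter_cap_lt_top (hE : finrank ℝ E = m + 1) (hu : ‖u‖ = 1) :
    μH[m] (sphere (0 : E) 1 ∩ {x | 1 / 2 ≤ ⟪u, x⟫}) < ⊤ := by
  have := isAddHaarMeasure_hausdorffMeasure_orthogonal_span_unit hE hu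
  set C := sphere (0 : E) 1 ∩ {x | 1 / 2 ≤ ⟪u, x⟫}
  set f : C → (ℝ ∙ u)ᗮ := fun z ↦ (ℝ ∙ u)ᗮ.orthogonalProjectionOnto z
  have hf : AntilipschitzWith 3 f := by
    refine AntilipschitzWith.of_le_mul_dist fun a b ↦ ?_
    rw [Subtype.dist_eq, dist_eq_norm, dist_eq_norm]
    exact norm_sub_le_three_mul_norm_starProjection_sub hu
      (mem_sphere_zero_iff_norm.1 a.2.1) (mem_sphere_zero_iff_norm.1 b.2.1) a.2.2 b.2.2
  have hrange : f '' univ ⊆ closedBall 0 1 := by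
    rintro _ ⟨z, -, rfl⟩
    rw [mem_closedBall_zero_iff, ← mem_sphere_zero_iff_norm.1 z.2.1]
    exact (ℝ ∙ u)ᗮ.norm_orthogonalProjectionOnto_apply_le z
  calc μH[m] C = μH[m] (univ : Set C) := by
        simpa using (isometry_subtype_coe (s := C)).hausdorffMeasure_image
          (Or.inl m.cast_nonneg) univ
    _ ≤ ((3 : NNReal) : ENNReal) ^ (m : ℝ) * μH[m] (f '' univ) :=
        hf.le_hausdorffMeasure_image m.cast_nonneg univ
    _ < ⊤ := ENNReal.mul_lt_top (by simp)
        ((measure_mono hrange).trans_lt (isCompact_closedBall _ _).measure_lt_top)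

theorem hausdorffMeasure_sphere_lt_top (hE : finrank ℝ E = m + 1) :
    μH[m] (sphere (0 : E) 1) < ⊤ := by
  obtain ⟨t, ht⟩ := (isCompact_sphere (0 : E) 1).elim_finite_subcover
    (fun u : sphere (0 : E) 1 ↦ {x : E | 1 / 2 < ⟪(u : E), x⟫})
    (fun _ ↦ isOpen_lt continuous_const (continuous_const.inner continuous_id))
    (fun x hx ↦ mem_iUnion.2 ⟨⟨x, hx⟩, by
      simp [mem_sphere_zero_iff_norm.1 hx]; norm_num⟩)
  have hcover : sphere (0 : E) 1 ⊆ ⋃ u ∈ t, sphere (0 : E) 1 ∩ {x | 1 / 2 ≤ ⟪(u : E), x⟫} := by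
    intro x hx
    obtain ⟨u, hu, hxu : 1 / 2 < ⟪(u : E), x⟫⟩ := mem_iUnion₂.1 (ht hx)
    exact mem_iUnion₂.2 ⟨u, hu, hx, hxu.le⟩
  refine (measure_mono hcover).trans_lt
    ((measure_biUnion_finset_le t _).trans_lt (ENNReal.sum_lt_top.2 fun u _ ↦ ?_))
  exact hausdorffMeasure_sphere_inter_cap_lt_top hE (mem_sphere_zero_iff_norm.1 u.2)

theorem isFiniteMeasure_hausdorffMeasure_sphere (hE : finrank ℝ E = m + 1) :
    IsFiniteMeasure (μH[m] : Measure (sphere (0 : E) 1)) := by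
  refine ⟨?_⟩
  rw [← (isometry_subtype_coe (s := sphere (0 : E) 1)).hausdorffMeasure_image
    (Or.inl m.cast_nonneg), image_univ, Subtype.range_coe]
  exact hausdorffMeasure_sphere_lt_top hE

theorem isOpenPosMeasure_hausdorffMeasure_sphere (hE : finrank ℝ E = m + 1) :
    (μH[m] : Measure (sphere (0 : E) 1)).IsOpenPosMeasure := by
  refine ⟨fun U hU ⟨u, huU⟩ ↦ ?_⟩
  obtain ⟨r, hr, hball⟩ := Metric.isOpen_iff.1 hU u huU
  have himage : ((↑) : sphere (0 : E) 1 → E) '' ball u r = sphere (0 : E) 1 ∩ ball (u : E) r := by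
    ext x; simp [and_comm]
  refine (pos_iff_ne_zero.1 ?_)
  calc (0 : ENNReal) < μH[m] (sphere (0 : E) 1 ∩ ball (u : E) r) :=
        hausdorffMeasure_sphere_inter_ball_pos hE (mem_sphere_zero_iff_norm.1 u.2) hr
    _ = μH[m] (ball u r) := by
        rw [← himage, (isometry_subtype_coe).hausdorffMeasure_image (Or.inl m.cast_nonneg)]
    _ ≤ μH[m] U := measure_mono hball

end SphereGeometry

section WeightedHolder

variable {X : Type*} [MeasurableSpace X] {μ : Measure X} {F G : X → ℝ} {a b : ℝ}

theorem MeasureTheory.Integrable.rpow_mul_rpow (hF : Integrable F μ) (hG : Integrable G μ)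
    (hF0 : ∀ x, 0 ≤ F x) (hG0 : ∀ x, 0 ≤ G x) (ha : 0 ≤ a) (hb : 0 ≤ b) (hab : a + b = 1) :
    Integrable (fun x ↦ F x ^ a * G x ^ b) μ := by
  refine ((hF.const_mul a).add (hG.const_mul b)).mono' ?_ (.of_forall fun x ↦ ?_)
  · exact ((hF.aemeasurable.pow_const a).mul (hG.aemeasurable.pow_const b)).aestronglyMeasurable
  · rw [Real.norm_of_nonneg (by have := hF0 x; have := hG0 x; positivity)]
    exact geom_mean_le_arith_mean2_weighted ha hb (hF0 x) (hG0 x) hab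

noncomputable def youngDefect (μ : Measure X) (F G : X → ℝ) (a b : ℝ) (x : X) : ℝ :=
  a * (F x / ∫ y, F y ∂μ) + b * (G x / ∫ y, G y ∂μ) -
    (F x / ∫ y, F y ∂μ) ^ a * (G x / ∫ y, G y ∂μ) ^ b

theorem youngDefect_nonneg (hF0 : ∀ x, 0 ≤ F x) (hG0 : ∀ x, 0 ≤ G x)
    (hA : 0 ≤ ∫ x, F x ∂μ) (hC : 0 ≤ ∫ x, G x ∂μ) (ha : 0 ≤ a) (hb : 0 ≤ b) (hab : a + b = 1)
    (x : X) : 0 ≤ youngDefect μ F G a b x :=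
  sub_nonneg.2 <| geom_mean_le_arith_mean2_weighted ha hb (div_nonneg (hF0 x) hA)
    (div_nonneg (hG0 x) hC) hab

theorem youngDefect_eq_zero_iff (hF0 : ∀ x, 0 ≤ F x) (hG0 : ∀ x, 0 ≤ G x)
    (hA : 0 ≤ ∫ x, F x ∂μ) (hC : 0 ≤ ∫ x, G x ∂μ) (ha : 0 < a) (hb : 0 < b) (hab : a + b = 1)
    (x : X) : youngDefect μ F G a b x = 0 ↔ F x / ∫ y, F y ∂μ = G x / ∫ y, G y ∂μ := by
  rw [youngDefect, sub_eq_zero, eq_comm]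
  exact geom_mean_eq_arith_mean2_weighted_iff_of_pos ha hb (div_nonneg (hF0 x) hA)
    (div_nonneg (hG0 x) hC) hab

theorem integral_youngDefect (hF : Integrable F μ) (hG : Integrable G μ)
    (hF0 : ∀ x, 0 ≤ F x) (hG0 : ∀ x, 0 ≤ G x) (hA : 0 < ∫ x, F x ∂μ) (hC : 0 < ∫ x, G x ∂μ)
    (ha : 0 ≤ a) (hb : 0 ≤ b) (hab : a + b = 1) :
    Integrable (youngDefect μ F G a b) μ ∧ ∫ x, youngDefect μ F G a b x ∂μ =
      1 - (∫ x, F x ^ a * G x ^ b ∂μ) / ((∫ x, F x ∂μ) ^ a * (∫ x, G x ∂μ) ^ b) := by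
  have hFG := hF.rpow_mul_rpow hG hF0 hG0 ha hb hab
  have hlin : Integrable (fun x ↦ a * (F x / ∫ y, F y ∂μ) + b * (G x / ∫ y, G y ∂μ)) μ :=
    (hF.div_const _).const_mul a |>.add <| (hG.div_const _).const_mul b
  have hD : youngDefect μ F G a b = fun x ↦ a * (F x / ∫ y, F y ∂μ) +
      b * (G x / ∫ y, G y ∂μ) - F x ^ a * G x ^ b / ((∫ y, F y ∂μ) ^ a * (∫ y, G y ∂μ) ^ b) := by
    funext x
    rw [youngDefect, div_rpow (hF0 x) hA.le, div_rpow (hG0 x) hC.le, div_mul_div_comm]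
  rw [hD]
  refine ⟨hlin.sub (hFG.div_const _), ?_⟩
  rw [integral_sub hlin (hFG.div_const _), integral_add ((hF.div_const _).const_mul a)
    ((hG.div_const _).const_mul b), integral_const_mul, integral_const_mul, integral_div,
    integral_div, integral_div, div_self hA.ne', div_self hC.ne', mul_one, mul_one, hab]

theorem integral_rpow_mul_rpow_le (hF : Integrable F μ) (hG : Integrable G μ)
    (hF0 : ∀ x, 0 ≤ F x) (hG0 : ∀ x, 0 ≤ G x) (hA : 0 < ∫ x, F x ∂μ) (hC : 0 < ∫ x, G x ∂μ)
    (ha : 0 ≤ a) (hb : 0 ≤ b) (hab : a + b = 1) :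
    ∫ x, F x ^ a * G x ^ b ∂μ ≤ (∫ x, F x ∂μ) ^ a * (∫ x, G x ∂μ) ^ b := by
  have h0 : 0 ≤ ∫ x, youngDefect μ F G a b x ∂μ :=
    integral_nonneg (youngDefect_nonneg hF0 hG0 hA.le hC.le ha hb hab)
  rwa [(integral_youngDefect hF hG hF0 hG0 hA hC ha hb hab).2, sub_nonneg,
    div_le_one (by positivity)] at h0

theorem integral_rpow_mul_rpow_eq_iff (hF : Integrable F μ) (hG : Integrable G μ)
    (hF0 : ∀ x, 0 ≤ F x) (hG0 : ∀ x, 0 ≤ G x) (hA : 0 < ∫ x, F x ∂μ) (hC : 0 < ∫ x, G x ∂μ)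
    (ha : 0 < a) (hb : 0 < b) (hab : a + b = 1) :
    ∫ x, F x ^ a * G x ^ b ∂μ = (∫ x, F x ∂μ) ^ a * (∫ x, G x ∂μ) ^ b ↔
      ∃ c, ∀ᵐ x ∂μ, F x = c * G x := by
  obtain ⟨hDi, hD⟩ := integral_youngDefect hF hG hF0 hG0 hA hC ha.le hb.le hab
  constructor
  · intro h
    rw [h, div_self (by positivity), sub_self, integral_eq_zero_iff_of_nonneg
      (youngDefect_nonneg hF0 hG0 hA.le hC.le ha.le hb.le hab) hDi] at hD
    refine ⟨(∫ x, F x ∂μ) / ∫ x, G x ∂μ, hD.mono fun x hx ↦ ?_⟩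
    have := (youngDefect_eq_zero_iff hF0 hG0 hA.le hC.le ha hb hab x).1 hx
    field_simp at this ⊢
    linarith
  · rintro ⟨c, hc⟩
    have hAC : ∫ x, F x ∂μ = c * ∫ x, G x ∂μ := by rw [integral_congr_ae hc, integral_const_mul]
    have hc0 : 0 ≤ c := (pos_of_mul_pos_left (hAC ▸ hA) hC.le).le
    calc ∫ x, F x ^ a * G x ^ b ∂μ = ∫ x, c ^ a * G x ∂μ := by
          refine integral_congr_ae (hc.mono fun x hx ↦ ?_)
          dsimp only
          rw [hx, mul_rpow hc0 (hG0 x), mul_assoc, ← rpow_add' (hG0 x) (by linarith), hab,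
            rpow_one]
      _ = (∫ x, F x ∂μ) ^ a * (∫ x, G x ∂μ) ^ b := by
        rw [integral_const_mul, hAC, mul_rpow hc0 hC.le, mul_assoc, ← rpow_add hC, hab,
          rpow_one]

end WeightedHolder

theorem MeasureTheory.integral_pos_of_forall_pos {X : Type*} [MeasurableSpace X]
    {μ : Measure X} [NeZero μ] {f : X → ℝ} (hf : Integrable f μ) (hpos : ∀ x, 0 < f x) :
    0 < ∫ x, f x ∂μ := by
  rw [integral_pos_iff_support_of_nonneg (fun x ↦ (hpos x).le) hf,
    Function.support_eq_univ fun x ↦ (hpos x).ne']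
  exact Measure.measure_univ_pos.2 (NeZero.ne μ)

section DualMixed

variable {q p x y : ℝ}

theorem rpow_add_mul_rpow_neg_eq (hx : 0 < x) (hy : 0 < y) :
    x ^ (q + p) * y ^ (-p) = (x / y) ^ (q + p) * y ^ q := by
  rw [div_rpow hx.le hy.le, div_mul_eq_mul_div, mul_div_assoc, ← rpow_sub hy]
  ring_nf

theorem rpow_add_mul_rpow_neg_rpow_mul_rpow (hq : 0 < q) (hp : 0 < p) (hx : 0 < x) (hy : 0 < y) :
    (x ^ (q + p) * y ^ (-p)) ^ (q / (q + p)) * (y ^ q) ^ (p / (q + p)) = x ^ q := by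
  rw [mul_rpow (by positivity) (by positivity), ← rpow_mul hx.le, ← rpow_mul hy.le,
    ← rpow_mul hy.le, mul_assoc, ← rpow_add hy]
  have hqp : q + p ≠ 0 := by positivity
  field_simp
  simp

theorem rpow_mul_rpow_rpow_add_mul_rpow_neg (hq : 0 < q) (hp : 0 < p) (hx : 0 < x)
    (hy : 0 < y) : (x ^ (q / (q + p)) * y ^ (p / (q + p))) ^ (q + p) * y ^ (-p) = x ^ q := by
  rw [mul_rpow (by positivity) (by positivity), ← rpow_mul hx.le, ← rpow_mul hy.le,
    mul_assoc, ← rpow_add hy]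
  have hqp : q + p ≠ 0 := by positivity
  field_simp
  simp

variable {X : Type*} [MeasurableSpace X] {μ : Measure X} {f g : X → ℝ}

theorem exists_ae_eq_mul_rpow_iff (hqp : q + p ≠ 0) (hf : ∀ x, 0 < f x) (hg : ∀ x, 0 < g x) :
    (∃ c, ∀ᵐ x ∂μ, f x ^ (q + p) * g x ^ (-p) = c * g x ^ q) ↔
      ∃ c, ∀ᵐ x ∂μ, f x = c * g x := by
  simp_rw [rpow_add_mul_rpow_neg_eq (hf _) (hg _), mul_left_inj' (rpow_pos_of_pos (hg _) q).ne']
  constructor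
  · rintro ⟨c, hc⟩
    refine ⟨c ^ (q + p)⁻¹, hc.mono fun x hx ↦ ?_⟩
    rw [← hx, rpow_rpow_inv (div_pos (hf x) (hg x)).le hqp, div_mul_cancel₀ _ (hg x).ne']
  · rintro ⟨c, hc⟩
    refine ⟨c ^ (q + p), hc.mono fun x hx ↦ ?_⟩
    rw [hx, mul_div_assoc, div_self (hg x).ne', mul_one]

theorem integral_rpow_eq_integral_rpow_mul_rpow (hq : 0 < q) (hp : 0 < p) (hf : ∀ x, 0 < f x)
    (hg : ∀ x, 0 < g x) : ∫ x, f x ^ q ∂μ =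
      ∫ x, (f x ^ (q + p) * g x ^ (-p)) ^ (q / (q + p)) * (g x ^ q) ^ (p / (q + p)) ∂μ :=
  integral_congr_ae <| .of_forall fun x ↦
    (rpow_add_mul_rpow_neg_rpow_mul_rpow hq hp (hf x) (hg x)).symm

variable [NeZero μ]

theorem integral_dual_minkowski_le (hq : 0 < q) (hp : 0 < p) (hf : ∀ x, 0 < f x)
    (hg : ∀ x, 0 < g x) (hfg : Integrable (fun x ↦ f x ^ (q + p) * g x ^ (-p)) μ)
    (hgq : Integrable (fun x ↦ g x ^ q) μ) :
    (∫ x, f x ^ q ∂μ) ^ (q + p) * (∫ x, g x ^ q ∂μ) ^ (-p) ≤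
      (∫ x, f x ^ (q + p) * g x ^ (-p) ∂μ) ^ q := by
  have hF0 : ∀ x, 0 < f x ^ (q + p) * g x ^ (-p) := fun x ↦ by
    have := hf x; have := hg x; positivity
  have hG0 : ∀ x, 0 < g x ^ q := fun x ↦ rpow_pos_of_pos (hg x) q
  have hA := integral_pos_of_forall_pos hfg hF0
  have hC := integral_pos_of_forall_pos hgq hG0
  rw [← rpow_mul_rpow_rpow_add_mul_rpow_neg hq hp hA hC,
    integral_rpow_eq_integral_rpow_mul_rpow hq hp hf hg]
  gcongr
  · exact integral_nonneg fun x ↦ by have := hf x; have := hg x; positivity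
  · exact integral_rpow_mul_rpow_le hfg hgq (fun x ↦ (hF0 x).le) (fun x ↦ (hG0 x).le) hA hC
      (by positivity) (by positivity) (by field_simp)

theorem integral_dual_minkowski_eq_iff (hq : 0 < q) (hp : 0 < p) (hf : ∀ x, 0 < f x)
    (hg : ∀ x, 0 < g x) (hfg : Integrable (fun x ↦ f x ^ (q + p) * g x ^ (-p)) μ)
    (hgq : Integrable (fun x ↦ g x ^ q) μ) :
    (∫ x, f x ^ q ∂μ) ^ (q + p) * (∫ x, g x ^ q ∂μ) ^ (-p) =
      (∫ x, f x ^ (q + p) * g x ^ (-p) ∂μ) ^ q ↔ ∃ c, ∀ᵐ x ∂μ, f x = c * g x := by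
  have hF0 : ∀ x, 0 < f x ^ (q + p) * g x ^ (-p) := fun x ↦ by
    have := hf x; have := hg x; positivity
  have hG0 : ∀ x, 0 < g x ^ q := fun x ↦ rpow_pos_of_pos (hg x) q
  have hA := integral_pos_of_forall_pos hfg hF0
  have hC := integral_pos_of_forall_pos hgq hG0
  rw [← rpow_mul_rpow_rpow_add_mul_rpow_neg hq hp hA hC, mul_left_inj' (by positivity),
    rpow_left_inj (integral_nonneg fun x ↦ (rpow_pos_of_pos (hf x) q).le) (by positivity)
      (by positivity), integral_rpow_eq_integral_rpow_mul_rpow hq hp hf hg,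
    integral_rpow_mul_rpow_eq_iff hfg hgq (fun x ↦ (hF0 x).le) (fun x ↦ (hG0 x).le) hA hC
      (by positivity) (by positivity) (by field_simp),
    exists_ae_eq_mul_rpow_iff (by positivity) hf hg]

end DualMixed

theorem sphereσ_succ (m : ℕ) : sphereσ (m + 1) = μH[m] := by
  simp [sphereσ]

theorem isFiniteMeasure_sphereσ {n : ℕ} (hn : 0 < n) : IsFiniteMeasure (sphereσ n) := by
  obtain ⟨m, rfl⟩ := Nat.exists_eq_add_one_of_ne_zero hn.ne'
  rw [sphereσ_succ]
  exact isFiniteMeasure_hausdorffMeasure_sphere finrank_euclideanSpace_fin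

theorem isOpenPosMeasure_sphereσ {n : ℕ} (hn : 0 < n) : (sphereσ n).IsOpenPosMeasure := by
  obtain ⟨m, rfl⟩ := Nat.exists_eq_add_one_of_ne_zero hn.ne'
  rw [sphereσ_succ]
  exact isOpenPosMeasure_hausdorffMeasure_sphere finrank_euclideanSpace_fin

theorem exists_ae_eq_mul_iff_of_continuous {X : Type*} [TopologicalSpace X] [MeasurableSpace X]
    [Nonempty X] {μ : Measure X} [μ.IsOpenPosMeasure] {f g : X → ℝ} (hfc : Continuous f)
    (hgc : Continuous g) (hf : ∀ x, 0 < f x) (hg : ∀ x, 0 < g x) :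
    (∃ c, ∀ᵐ x ∂μ, f x = c * g x) ↔ ∃ c, 0 < c ∧ ∀ x, f x = c * g x := by
  constructor
  · rintro ⟨c, hc⟩
    have hfg : ∀ x, f x = c * g x :=
      congrFun ((hfc.ae_eq_iff_eq μ (continuous_const.mul hgc)).1 hc)
    obtain ⟨x⟩ := ‹Nonempty X›
    exact ⟨c, pos_of_mul_pos_left (hfg x ▸ hf x) (hg x).le, hfg⟩
  · rintro ⟨c, -, hc⟩
    exact ⟨c, .of_forall hc⟩

/-- Lutwak's `L_p`-dual Minkowski inequality:
`Ṽ₋ₚ(K,L)ⁿ ≥ V(K)^{n+p} V(L)^{-p}`, with equality iff `K` and `L` are dilates. -/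
theorem Lp_dual_minkowski
    (n : ℕ) (hn : 0 < n) (p : ℝ) (hp : 1 ≤ p)
    (ρK ρL : sphere (0 : EuclideanSpace ℝ (Fin n)) 1 → ℝ)
    (hKc : Continuous ρK) (hLc : Continuous ρL)
    (hKpos : ∀ u, 0 < ρK u) (hLpos : ∀ u, 0 < ρL u)
    (Vmp VK VL : ℝ)
    (hVmp : Vmp = (1 / n) * ∫ u, (ρK u) ^ ((n : ℝ) + p) * (ρL u) ^ (-p) ∂(sphereσ n))
    (hVK : VK = (1 / n) * ∫ u, (ρK u) ^ (n : ℕ) ∂(sphereσ n))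
    (hVL : VL = (1 / n) * ∫ u, (ρL u) ^ (n : ℕ) ∂(sphereσ n)) :
    Vmp ^ (n : ℕ) ≥ VK ^ ((n : ℝ) + p) * VL ^ (-p) ∧
      (Vmp ^ (n : ℕ) = VK ^ ((n : ℝ) + p) * VL ^ (-p) ↔
        ∃ c : ℝ, 0 < c ∧ ∀ u, ρK u = c * ρL u) := by
  have := isFiniteMeasure_sphereσ hn
  have := isOpenPosMeasure_sphereσ hn
  set μ := (n : ℝ≥0∞)⁻¹ • sphereσ n
  have : IsFiniteMeasure μ :=
    (sphereσ n).smul_finite (ENNReal.inv_ne_top.2 (Nat.cast_ne_zero.2 hn.ne'))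
  have : μ.IsOpenPosMeasure :=
    Measure.isOpenPosMeasure_smul _ (ENNReal.inv_ne_zero.2 (ENNReal.natCast_ne_top n))
  have : Nonempty (sphere (0 : EuclideanSpace ℝ (Fin n)) 1) :=
    ⟨⟨EuclideanSpace.single ⟨0, hn⟩ 1, by simp⟩⟩
  have hμ (h : sphere (0 : EuclideanSpace ℝ (Fin n)) 1 → ℝ) :
      1 / n * ∫ u, h u ∂(sphereσ n) = ∫ u, h u ∂μ := by
    simp [μ, integral_smul_measure]
  have hint {h : sphere (0 : EuclideanSpace ℝ (Fin n)) 1 → ℝ} (hh : Continuous h) :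
      Integrable h μ := hh.integrable_of_hasCompactSupport (.of_compactSpace h)
  have hKq := fun q : ℝ ↦ hKc.rpow_const (p := q) fun u ↦ .inl (hKpos u).ne'
  have hLq := fun q : ℝ ↦ hLc.rpow_const (p := q) fun u ↦ .inl (hLpos u).ne'
  rw [hμ] at hVmp hVK hVL
  simp only [← rpow_natCast] at hVK hVL ⊢
  subst hVmp hVK hVL
  have hq : (0 : ℝ) < n := Nat.cast_pos.2 hn
  have hp0 : 0 < p := by linarith
  rw [ge_iff_le, eq_comm]
  exact ⟨integral_dual_minkowski_le hq hp0 hKpos hLpos (hint ((hKq _).mul (hLq _))) (hint (hLq _)),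
    (integral_dual_minkowski_eq_iff hq hp0 hKpos hLpos (hint ((hKq _).mul (hLq _)))
      (hint (hLq _))).trans (exists_ae_eq_mul_iff_of_continuous hKc hLc hKpos hLpos)⟩
end

section
/- Let L₁, K₁,...,Kₙ be star bodies in ℝⁿ, p ≥ 1, 1 ≤ r ≤ n. Define Ṽ_{-p}(L₁,K₁,...,Kₙ) = (1/n)∫_{S^{n-1}} ρ(K₁,u)^{-p} ρ(L₁,u)^{1+p} ρ(K₂,u)···ρ(Kₙ,u) dS(u). Then Ṽ(L₁,K₂,...,Kₙ)^{p+1} / Ṽ_{-p}(L₁,K₁,K₂,...,Kₙ) ≤ ∏_{i=1}^r Ṽ(Kᵢ,...,Kᵢ,K_{r+1},...,Kₙ)^{p/r}. -/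
open MeasureTheory Metric Real Set Finset

/-! Pointwise, `ρ_L ρ₂⋯ρₙ = (ρ₁^{-p} ρ_L^{1+p} ρ₂⋯ρₙ)^{1/(1+p)} (ρ₁ρ₂⋯ρₙ)^{p/(1+p)}`, so Hölder's
inequality gives `Ṽ(L₁,K₂,…,Kₙ)^{1+p} ≤ Ṽ₋ₚ(L₁,K₁,…,Kₙ) Ṽ(K₁,…,Kₙ)^p`. Likewise
`ρ₁⋯ρₙ = ∏_{i ≤ r} (ρᵢ^r ρ_{r+1}⋯ρₙ)^{1/r}`, and the `r`-fold Hölder inequality is the dual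
Aleksandrov–Fenchel inequality `Ṽ(K₁,…,Kₙ) ≤ ∏_{i ≤ r} Ṽ(Kᵢ[r],K_{r+1},…,Kₙ)^{1/r}`; its `p`-th
power finishes the proof. The factor `1/n` is absorbed into the measure. -/

theorem rpow_neg_mul_rpow_mul_rpow_mul_eq {x y z p : ℝ} (hx : 0 < x) (hy : 0 ≤ y) (hz : 0 ≤ z)
    (hp : 0 < 1 + p) :
    (x ^ (-p) * y ^ (1 + p) * z) ^ (1 + p)⁻¹ * (x * z) ^ (p / (1 + p)) = y * z := by
  have hp' : 1 + p ≠ 0 := hp.ne'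
  have hsum : (1 + p)⁻¹ + p / (1 + p) = 1 := by field_simp
  rw [mul_rpow (by positivity) hz, mul_rpow (by positivity) (by positivity),
    mul_rpow hx.le hz, ← rpow_mul hx.le, ← rpow_mul hy, mul_inv_cancel₀ hp', rpow_one]
  calc x ^ (-p * (1 + p)⁻¹) * y * z ^ (1 + p)⁻¹ * (x ^ (p / (1 + p)) * z ^ (p / (1 + p)))
      = x ^ (-p * (1 + p)⁻¹ + p / (1 + p)) * y * z ^ ((1 + p)⁻¹ + p / (1 + p)) := by
        rw [rpow_add hx, rpow_add' hz (by rw [hsum]; exact one_ne_zero)]; ring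
    _ = y * z := by
        rw [show -p * (1 + p)⁻¹ + p / (1 + p) = 0 by ring,
          hsum, rpow_zero, rpow_one, one_mul]

theorem prod_Icc_rpow_pow_mul_prod_Icc {n r : ℕ} (hr1 : 1 ≤ r) (hrn : r ≤ n) {a : ℕ → ℝ}
    (ha : ∀ i ∈ Finset.Icc 1 n, 0 ≤ a i) :
    ∏ i ∈ Finset.Icc 1 r, (a i ^ r * ∏ j ∈ Finset.Icc (r + 1) n, a j) ^ (r : ℝ)⁻¹ =
      ∏ i ∈ Finset.Icc 1 n, a i := by
  have hQ : 0 ≤ ∏ j ∈ Finset.Icc (r + 1) n, a j :=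
    prod_nonneg fun j hj => ha j (Finset.Icc_subset_Icc (by omega) le_rfl hj)
  calc ∏ i ∈ Finset.Icc 1 r, (a i ^ r * ∏ j ∈ Finset.Icc (r + 1) n, a j) ^ (r : ℝ)⁻¹
      = ∏ i ∈ Finset.Icc 1 r, a i * (∏ j ∈ Finset.Icc (r + 1) n, a j) ^ (r : ℝ)⁻¹ := by
        refine prod_congr rfl fun i hi => ?_
        rw [mul_rpow (pow_nonneg (ha i (Finset.Icc_subset_Icc le_rfl hrn hi)) r) hQ,
          pow_rpow_inv_natCast (ha i (Finset.Icc_subset_Icc le_rfl hrn hi)) (by omega)]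
    _ = (∏ i ∈ Ioc 0 r, a i) * ∏ j ∈ Ioc r n, a j := by
        rw [prod_mul_distrib, prod_const, Nat.card_Icc, Nat.add_sub_cancel,
          rpow_inv_natCast_pow hQ (by omega), ← Finset.Icc_add_one_left_eq_Ioc 0 r,
          Finset.Icc_add_one_left_eq_Ioc r n, zero_add]
    _ = ∏ i ∈ Finset.Icc 1 n, a i := by
        rw [prod_Ioc_consecutive _ (Nat.zero_le r) hrn, ← Finset.Icc_add_one_left_eq_Ioc 0 n,
          zero_add]

section Holder

variable {α : Type*} [MeasurableSpace α] {μ : Measure α}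

theorem integral_prod_rpow_le_prod_integral_rpow {ι : Type*} (s : Finset ι) {f : ι → α → ℝ}
    {w : ι → ℝ} (hf : ∀ i ∈ s, 0 ≤ᵐ[μ] f i) (hfi : ∀ i ∈ s, Integrable (f i) μ)
    (hw : ∀ i ∈ s, 0 ≤ w i) (hw1 : ∑ i ∈ s, w i = 1) :
    ∫ a, ∏ i ∈ s, f i a ^ w i ∂μ ≤ ∏ i ∈ s, (∫ a, f i a ∂μ) ^ w i := by
  have hrhs : 0 ≤ ∏ i ∈ s, (∫ a, f i a ∂μ) ^ w i :=
    prod_nonneg fun i hi => rpow_nonneg (integral_nonneg_of_ae (hf i hi)) _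
  by_cases hint : Integrable (fun a => ∏ i ∈ s, f i a ^ w i) μ
  swap
  · rw [integral_undef hint]
    exact hrhs
  have hf' : ∀ᵐ a ∂μ, ∀ i ∈ s, 0 ≤ f i a := (Filter.eventually_all_finset s).2 hf
  have hofReal : ∀ᵐ a ∂μ, ENNReal.ofReal (∏ i ∈ s, f i a ^ w i)
      = ∏ i ∈ s, ENNReal.ofReal (f i a) ^ w i := by
    filter_upwards [hf'] with a ha
    rw [ENNReal.ofReal_prod_of_nonneg fun i hi => rpow_nonneg (ha i hi) _]
    exact prod_congr rfl fun i hi => (ENNReal.ofReal_rpow_of_nonneg (ha i hi) (hw i hi)).symm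
  rw [← ENNReal.ofReal_le_ofReal_iff hrhs, ofReal_integral_eq_lintegral_ofReal hint
    (by filter_upwards [hf'] with a ha using prod_nonneg fun i hi => rpow_nonneg (ha i hi) _),
    lintegral_congr_ae hofReal, ENNReal.ofReal_prod_of_nonneg
      fun i hi => rpow_nonneg (integral_nonneg_of_ae (hf i hi)) _]
  calc ∫⁻ a, ∏ i ∈ s, ENNReal.ofReal (f i a) ^ w i ∂μ
      ≤ ∏ i ∈ s, (∫⁻ a, ENNReal.ofReal (f i a) ∂μ) ^ w i :=
        ENNReal.lintegral_prod_norm_pow_le s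
          (fun i hi => (hfi i hi).aemeasurable.ennreal_ofReal) hw1 hw
    _ = ∏ i ∈ s, ENNReal.ofReal ((∫ a, f i a ∂μ) ^ w i) := by
        refine prod_congr rfl fun i hi => ?_
        rw [← ofReal_integral_eq_lintegral_ofReal (hfi i hi) (hf i hi),
          ENNReal.ofReal_rpow_of_nonneg (integral_nonneg_of_ae (hf i hi)) (hw i hi)]

theorem integral_rpow_mul_rpow_le_s7 {f g : α → ℝ} {a b : ℝ} (hf : 0 ≤ᵐ[μ] f) (hg : 0 ≤ᵐ[μ] g)
    (hfi : Integrable f μ) (hgi : Integrable g μ) (ha : 0 ≤ a) (hb : 0 ≤ b) (hab : a + b = 1) :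
    ∫ x, f x ^ a * g x ^ b ∂μ ≤ (∫ x, f x ∂μ) ^ a * (∫ x, g x ∂μ) ^ b := by
  simpa using integral_prod_rpow_le_prod_integral_rpow univ (f := fun i => cond i f g)
    (w := fun i => cond i a b) (by simp [hf, hg]) (by simp [hfi, hgi]) (by simp [ha, hb])
    (by simpa using hab)

theorem integral_mul_rpow_one_add_le {x y z : α → ℝ} {p : ℝ} (hp : 0 ≤ p) (hx : ∀ a, 0 < x a)
    (hy : ∀ a, 0 ≤ y a) (hz : ∀ a, 0 ≤ z a)
    (hxyz : Integrable (fun a => x a ^ (-p) * y a ^ (1 + p) * z a) μ)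
    (hxz : Integrable (fun a => x a * z a) μ) :
    (∫ a, y a * z a ∂μ) ^ (1 + p) ≤
      (∫ a, x a ^ (-p) * y a ^ (1 + p) * z a ∂μ) * (∫ a, x a * z a ∂μ) ^ p := by
  have hp1 : 0 < 1 + p := by linarith
  have hA : 0 ≤ ∫ a, x a ^ (-p) * y a ^ (1 + p) * z a ∂μ :=
    integral_nonneg fun a => by have := hx a; have := hy a; have := hz a; positivity
  have hC : 0 ≤ ∫ a, x a * z a ∂μ := integral_nonneg fun a => mul_nonneg (hx a).le (hz a)
  have hHolder := integral_rpow_mul_rpow_le_s7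
    (.of_forall fun a => by have := hx a; have := hy a; have := hz a; positivity)
    (.of_forall fun a => mul_nonneg (hx a).le (hz a)) hxyz hxz (inv_nonneg.2 hp1.le)
    (div_nonneg hp hp1.le) (by field_simp)
  simp only [rpow_neg_mul_rpow_mul_rpow_mul_eq (hx _) (hy _) (hz _) hp1] at hHolder
  calc (∫ a, y a * z a ∂μ) ^ (1 + p)
      ≤ ((∫ a, x a ^ (-p) * y a ^ (1 + p) * z a ∂μ) ^ (1 + p)⁻¹
          * (∫ a, x a * z a ∂μ) ^ (p / (1 + p))) ^ (1 + p) := by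
        gcongr
        exact integral_nonneg fun a => mul_nonneg (hy a) (hz a)
    _ = _ := by
        rw [mul_rpow (by positivity) (by positivity), ← rpow_mul hA, ← rpow_mul hC,
          inv_mul_cancel₀ hp1.ne', div_mul_cancel₀ _ hp1.ne', rpow_one]

theorem integral_prod_Icc_le_prod_integral_rpow {n r : ℕ} (hr1 : 1 ≤ r) (hrn : r ≤ n)
    {ρ : ℕ → α → ℝ} (hρ : ∀ i ∈ Finset.Icc 1 n, ∀ a, 0 ≤ ρ i a)
    (hint : ∀ i ∈ Finset.Icc 1 r,
      Integrable (fun a => ρ i a ^ r * ∏ j ∈ Finset.Icc (r + 1) n, ρ j a) μ) :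
    ∫ a, ∏ j ∈ Finset.Icc 1 n, ρ j a ∂μ ≤
      ∏ i ∈ Finset.Icc 1 r,
        (∫ a, ρ i a ^ r * ∏ j ∈ Finset.Icc (r + 1) n, ρ j a ∂μ) ^ (r : ℝ)⁻¹ := by
  have hQ : ∀ a, 0 ≤ ∏ j ∈ Finset.Icc (r + 1) n, ρ j a := fun a =>
    Finset.prod_nonneg fun j hj => hρ j (Finset.Icc_subset_Icc (by omega) le_rfl hj) a
  have hHolder := integral_prod_rpow_le_prod_integral_rpow (Finset.Icc 1 r)
    (w := fun _ => (r : ℝ)⁻¹)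
    (fun i hi => .of_forall fun a =>
      mul_nonneg (pow_nonneg (hρ i (Finset.Icc_subset_Icc le_rfl hrn hi) a) r) (hQ a))
    hint (fun _ _ => by positivity) (by simp [Nat.card_Icc]; field_simp)
  simpa only [prod_Icc_rpow_pow_mul_prod_Icc hr1 hrn fun i hi => hρ i hi _] using hHolder

end Holder

theorem integral_eq_zero_of_not_isFiniteMeasure {X : Type*} [TopologicalSpace X] [CompactSpace X]
    [MeasurableSpace X] {μ : Measure X} (hμ : ¬IsFiniteMeasure μ) {f : X → ℝ}
    (hf : Continuous f) (hpos : ∀ x, 0 < f x) : ∫ x, f x ∂μ = 0 := by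
  refine integral_undef fun hfi => hμ ?_
  cases isEmpty_or_nonempty X with
  | inl _ => rw [Subsingleton.elim μ 0]; infer_instance
  | inr _ =>
    obtain ⟨x₀, -, hx₀⟩ := isCompact_univ.exists_isMinOn univ_nonempty hf.continuousOn
    have hconst : Integrable (fun _ => f x₀) μ :=
      hfi.mono' aestronglyMeasurable_const
        (.of_forall fun x => (abs_of_pos (hpos x₀)).le.trans (hx₀ (mem_univ x)))
    exact (integrable_const_iff.1 hconst).resolve_left (hpos x₀).ne'

theorem continuous_prod_Icc_and_pos {X : Type*} [TopologicalSpace X] {n k : ℕ}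
    {ρ : ℕ → X → ℝ} (hk : 1 ≤ k) (hc : ∀ i ∈ Finset.Icc 1 n, Continuous (ρ i))
    (hpos : ∀ i ∈ Finset.Icc 1 n, ∀ u, 0 < ρ i u) :
    (Continuous fun u => ∏ j ∈ Finset.Icc k n, ρ j u) ∧ ∀ u, 0 < ∏ j ∈ Finset.Icc k n, ρ j u :=
  ⟨continuous_finsetProd _ fun j hj => hc j (Finset.Icc_subset_Icc hk le_rfl hj),
    fun u => prod_pos fun j hj => hpos j (Finset.Icc_subset_Icc hk le_rfl hj) u⟩

theorem integral_pow_mul_prod_Icc_nonneg {α : Type*} [MeasurableSpace α] {μ : Measure α}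
    {n r i : ℕ} {ρ : ℕ → α → ℝ} (hrn : r ≤ n) (hρ : ∀ i ∈ Finset.Icc 1 n, ∀ a, 0 ≤ ρ i a)
    (hi : i ∈ Finset.Icc 1 r) : 0 ≤ ∫ a, ρ i a ^ r * ∏ j ∈ Finset.Icc (r + 1) n, ρ j a ∂μ :=
  integral_nonneg fun a => mul_nonneg (pow_nonneg (hρ i (Finset.Icc_subset_Icc le_rfl hrn hi) a) r)
    (Finset.prod_nonneg fun j hj => hρ j (Finset.Icc_subset_Icc (by omega) le_rfl hj) a)

section StarBodies

variable {X : Type*} [TopologicalSpace X] [CompactSpace X] [MeasurableSpace X]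
  [OpensMeasurableSpace X] {ν : Measure X} {n r : ℕ} {p : ℝ} {ρL : X → ℝ} {ρ : ℕ → X → ℝ}

theorem integral_mul_prod_rpow_le_mul_prod_integral [IsFiniteMeasure ν] (hr1 : 1 ≤ r)
    (hrn : r ≤ n) (hp : 0 ≤ p) (hLpos : ∀ u, 0 < ρL u)
    (hc : ∀ i ∈ Finset.Icc 1 n, Continuous (ρ i)) (hpos : ∀ i ∈ Finset.Icc 1 n, ∀ u, 0 < ρ i u)
    (hF : Continuous fun u => ρ 1 u ^ (-p) * ρL u ^ (1 + p) * ∏ j ∈ Finset.Icc 2 n, ρ j u) :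
    (∫ u, ρL u * ∏ j ∈ Finset.Icc 2 n, ρ j u ∂ν) ^ (p + 1) ≤
      (∫ u, ρ 1 u ^ (-p) * ρL u ^ (1 + p) * ∏ j ∈ Finset.Icc 2 n, ρ j u ∂ν) *
        ∏ i ∈ Finset.Icc 1 r,
          (∫ u, ρ i u ^ r * ∏ j ∈ Finset.Icc (r + 1) n, ρ j u ∂ν) ^ (p / r) := by
  have hn : 1 ∈ Finset.Icc 1 n := Finset.mem_Icc.2 ⟨le_rfl, hr1.trans hrn⟩
  have hint : ∀ f : X → ℝ, Continuous f → Integrable f ν :=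
    fun f hf => hf.integrable_of_hasCompactSupport (.of_compactSpace f)
  obtain ⟨hPc, hPpos⟩ := continuous_prod_Icc_and_pos one_le_two hc hpos
  obtain ⟨hQc, -⟩ := continuous_prod_Icc_and_pos (Nat.le_add_left 1 r) hc hpos
  have hmixed := integral_mul_rpow_one_add_le (μ := ν) hp (hpos 1 hn) (fun u => (hLpos u).le)
    (fun u => (hPpos u).le) (hint _ hF) (hint _ ((hc 1 hn).mul hPc))
  have hAF := integral_prod_Icc_le_prod_integral_rpow (μ := ν) hr1 hrn
    (fun i hi u => (hpos i hi u).le) fun i hi =>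
      hint _ (((hc i (Finset.Icc_subset_Icc le_rfl hrn hi)).pow r).mul hQc)
  simp only [Finset.Icc_eq_cons_Ioc (Finset.mem_Icc.1 hn).2, prod_cons,
    ← Finset.Icc_add_one_left_eq_Ioc] at hAF
  have hV1 : 0 ≤ ∫ u, ρ 1 u * ∏ j ∈ Finset.Icc 2 n, ρ j u ∂ν :=
    integral_nonneg fun u => (mul_pos (hpos 1 hn u) (hPpos u)).le
  have hD := fun i (hi : i ∈ Finset.Icc 1 r) =>
    integral_pow_mul_prod_Icc_nonneg (μ := ν) hrn (fun j hj u => (hpos j hj u).le) hi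
  calc (∫ u, ρL u * ∏ j ∈ Finset.Icc 2 n, ρ j u ∂ν) ^ (p + 1)
      ≤ (∫ u, ρ 1 u ^ (-p) * ρL u ^ (1 + p) * ∏ j ∈ Finset.Icc 2 n, ρ j u ∂ν) *
          (∫ u, ρ 1 u * ∏ j ∈ Finset.Icc 2 n, ρ j u ∂ν) ^ p := add_comm p 1 ▸ hmixed
    _ ≤ (∫ u, ρ 1 u ^ (-p) * ρL u ^ (1 + p) * ∏ j ∈ Finset.Icc 2 n, ρ j u ∂ν) *
          (∏ i ∈ Finset.Icc 1 r,
            (∫ u, ρ i u ^ r * ∏ j ∈ Finset.Icc (r + 1) n, ρ j u ∂ν) ^ (r : ℝ)⁻¹) ^ p :=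
        mul_le_mul_of_nonneg_left (rpow_le_rpow hV1 hAF hp)
        (integral_nonneg fun u => mul_nonneg (mul_nonneg (rpow_nonneg (hpos 1 hn u).le _)
          (rpow_nonneg (hLpos u).le _)) (hPpos u).le)
    _ = _ := by
        rw [← finsetProd_rpow _ _ fun i hi => rpow_nonneg (hD i hi) _]
        congr 1
        refine prod_congr rfl fun i hi => ?_
        rw [← rpow_mul (hD i hi), inv_mul_eq_div]

theorem integral_mul_prod_rpow_div_le_prod_integral (hr1 : 1 ≤ r) (hrn : r ≤ n) (hp : 0 ≤ p)
    (hLc : Continuous ρL) (hLpos : ∀ u, 0 < ρL u)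
    (hc : ∀ i ∈ Finset.Icc 1 n, Continuous (ρ i)) (hpos : ∀ i ∈ Finset.Icc 1 n, ∀ u, 0 < ρ i u) :
    (∫ u, ρL u * ∏ j ∈ Finset.Icc 2 n, ρ j u ∂ν) ^ (p + 1) /
        (∫ u, ρ 1 u ^ (-p) * ρL u ^ (1 + p) * ∏ j ∈ Finset.Icc 2 n, ρ j u ∂ν) ≤
      ∏ i ∈ Finset.Icc 1 r, (∫ u, ρ i u ^ r * ∏ j ∈ Finset.Icc (r + 1) n, ρ j u ∂ν) ^ (p / r) := by
  have hn : 1 ∈ Finset.Icc 1 n := Finset.mem_Icc.2 ⟨le_rfl, hr1.trans hrn⟩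
  obtain ⟨hPc, hPpos⟩ := continuous_prod_Icc_and_pos one_le_two hc hpos
  have hF : Continuous fun u => ρ 1 u ^ (-p) * ρL u ^ (1 + p) * ∏ j ∈ Finset.Icc 2 n, ρ j u :=
    (((hc 1 hn).rpow_const fun u => .inl (hpos 1 hn u).ne').mul
      (hLc.rpow_const fun u => .inl (hLpos u).ne')).mul hPc
  have hFpos : ∀ u, 0 < ρ 1 u ^ (-p) * ρL u ^ (1 + p) * ∏ j ∈ Finset.Icc 2 n, ρ j u :=
    fun u => by have := hpos 1 hn u; have := hLpos u; have := hPpos u; positivity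
  have hRHS : 0 ≤ ∏ i ∈ Finset.Icc 1 r,
      (∫ u, ρ i u ^ r * ∏ j ∈ Finset.Icc (r + 1) n, ρ j u ∂ν) ^ (p / r) :=
    Finset.prod_nonneg fun i hi => rpow_nonneg
      (integral_pow_mul_prod_Icc_nonneg hrn (fun j hj u => (hpos j hj u).le) hi) _
  by_cases hfin : IsFiniteMeasure ν
  · exact div_le_of_le_mul₀ (integral_nonneg fun u => (hFpos u).le) hRHS
      ((integral_mul_prod_rpow_le_mul_prod_integral hr1 hrn hp hLpos hc hpos hF).trans_eq
        (mul_comm _ _))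
  · -- the positive integrand is not integrable, so its Bochner integral is the junk value `0`
    rw [integral_eq_zero_of_not_isFiniteMeasure hfin hF hFpos, div_zero]
    exact hRHS

end StarBodies

/-- The `L_p` dual Aleksandrov–Fenchel inequality:
`Ṽ(L₁,K₂,...,Kₙ)^{p+1}/Ṽ₋ₚ(L₁,K₁,K₂,...,Kₙ) ≤ ∏_{i=1}^r Ṽ(Kᵢ[r],K_{r+1},...,Kₙ)^{p/r}`.
The star bodies `K₁,...,Kₙ` have radial functions `ρ 1, ..., ρ n`. -/
theorem Lp_dual_aleksandrov_fenchel
    (n r : ℕ) (hr1 : 1 ≤ r) (hrn : r ≤ n)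
    (p : ℝ) (hp : 1 ≤ p)
    (ρL : sphere (0 : EuclideanSpace ℝ (Fin n)) 1 → ℝ)
    (ρ : ℕ → (sphere (0 : EuclideanSpace ℝ (Fin n)) 1 → ℝ))
    (hLc : Continuous ρL) (hLpos : ∀ u, 0 < ρL u)
    (hc : ∀ i, 1 ≤ i → i ≤ n → Continuous (ρ i))
    (hpos : ∀ i, 1 ≤ i → i ≤ n → ∀ u, 0 < ρ i u)
    (Vmp VL : ℝ) (VAF : ℕ → ℝ)
    (hVmp : Vmp = (1 / n) * ∫ u,
      (ρ 1 u) ^ (-p) * (ρL u) ^ (1 + p) * ∏ j ∈ Finset.Icc 2 n, ρ j u ∂(sphereσ n))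
    (hVL : VL = (1 / n) * ∫ u, ρL u * ∏ j ∈ Finset.Icc 2 n, ρ j u ∂(sphereσ n))
    (hVAF : ∀ i, VAF i =
      (1 / n) * ∫ u, (ρ i u) ^ r * ∏ j ∈ Finset.Icc (r + 1) n, ρ j u ∂(sphereσ n)) :
    VL ^ (p + 1) / Vmp ≤ ∏ i ∈ Finset.Icc 1 r, (VAF i) ^ (p / r) := by
  have hν : ∀ f : sphere (0 : EuclideanSpace ℝ (Fin n)) 1 → ℝ, (1 / n : ℝ) * ∫ u, f u ∂sphereσ n
      = ∫ u, f u ∂(ENNReal.ofReal (1 / n) • sphereσ n) := fun f => by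
    rw [integral_smul_measure, ENNReal.toReal_ofReal (by positivity), smul_eq_mul]
  simp only [hVmp, hVL, hVAF, hν]
  exact integral_mul_prod_rpow_div_le_prod_integral hr1 hrn (by linarith) hLc hLpos
    (fun i hi => hc i (Finset.mem_Icc.1 hi).1 (Finset.mem_Icc.1 hi).2)
    (fun i hi => hpos i (Finset.mem_Icc.1 hi).1 (Finset.mem_Icc.1 hi).2)
end
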